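/- arXiv:2601.11358 — 2 statements merged into one kernel-verified Lean document; each statement's English description precedes it below -/
import Mathlib

section
/- If l ≤ u are reals, v a real, and p ∈ [0, 1/2], and η > 0, then (u - v)/(u - l) > p implies ((u + η) - v)/((u + η) - (l - η)) > p, provided u > v and u - l > 0. -/
theorem lt_add_div_add_of_lt_div {a b c d p : ℝ} (h : p < a / b) (hdc : p * d ≤ c)
    (hb : 0 < b) (hbd : 0 < b + d) : p < (a + c) / (b + d) := by
  rw [lt_div_iff₀ hb] at h
  rw [lt_div_iff₀ hbd, mul_add]
  linarith

theorem trigger_sound_widening_general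
    (l u v η p : ℝ) (hlu : l < u)
    (hp : p ≤ 1/2) (hη : 0 < η) :
    (u - v) / (u - l) > p → ((u + η) - v) / ((u + η) - (l - η)) > p := by
  intro h
  have hpη : p * (2 * η) ≤ η := by nlinarith
  have key := lt_add_div_add_of_lt_div h hpη (by linarith) (by linarith)
  convert key using 2 <;> ring

theorem trigger_sound_widening
    (l u v η p : ℝ) (hlu : l < u) (hvu : v < u)
    (hp0 : 0 ≤ p) (hp : p ≤ 1/2) (hη : 0 < η) :
    (u - v) / (u - l) > p → ((u + η) - v) / ((u + η) - (l - η)) > p :=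
  trigger_sound_widening_general l u v η p hlu hp hη
end

section
/- If two generators (columns) g_i and g_j of a zonotope's generator matrix are colinear, say g_j = λ·g_i for some real λ, then the zonotope is unchanged when the two columns are replaced by the single column (1 + |λ|)·g_i: Z(c, G) = Z(c, G'), where G' has the merged generator in place of g_i and omits g_j. -/
def zonotope {d k : Type*} [Fintype k] (c : d → ℝ) (G : Matrix d k ℝ) : Set (d → ℝ) :=
  {x | ∃ ε : k → ℝ, (∀ j, ε j ∈ Set.Icc (-1 : ℝ) 1) ∧ x = c + G.mulVec ε}

/-!
Colinearity lets the coefficients of `g_i` and `g_j` be traded for one: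
`ε_i • g_i + ε_j • g_j = (ε_i + λ ε_j) • g_i`. As `(ε_i, ε_j)` ranges over `[-1, 1]²`, the
coefficient `ε_i + λ ε_j` ranges exactly over `[-(1 + |λ|), 1 + |λ|]`, the extreme values being
attained at `ε_j = ±ε_i` with the sign of `λ`.
-/

open Set

namespace Matrix

variable {d k R : Type*} [DecidableEq k]

def mergeColumns [Mul R] (G : Matrix d k R) (i j : k) (μ : R) : Matrix d {m : k // m ≠ j} R :=
  fun r m => if (m : k) = i then μ * G r i else G r m

theorem mergeColumns_mulVec [Fintype k] [CommRing R] (G : Matrix d k R) {i j : k} (hij : i ≠ j)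
    {lam μ : R} (hcol : ∀ r, G r j = lam * G r i) {ε : k → R} {ε' : {m : k // m ≠ j} → R}
    (hmerge : μ * ε' ⟨i, hij⟩ = ε i + lam * ε j)
    (hrest : ∀ m : {m : k // m ≠ j}, (m : k) ≠ i → ε' m = ε m) :
    G.mergeColumns i j μ *ᵥ ε' = G *ᵥ ε := by
  ext r
  simp only [mulVec, dotProduct, mergeColumns]
  have hi : (⟨i, hij⟩ : {m : k // m ≠ j}) ∈ Finset.univ := Finset.mem_univ _
  rw [Fintype.sum_eq_add_sum_subtype_ne _ j, ← Finset.add_sum_erase _ _ hi,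
    ← Finset.add_sum_erase _ (fun m : {m : k // m ≠ j} => G r m * ε m) hi]
  have hrest_sum : ∑ m ∈ (Finset.univ : Finset {m : k // m ≠ j}).erase ⟨i, hij⟩,
        (if (m : k) = i then μ * G r i else G r m) * ε' m
      = ∑ m ∈ (Finset.univ : Finset {m : k // m ≠ j}).erase ⟨i, hij⟩, G r m * ε m := by
    refine Finset.sum_congr rfl fun m hm => ?_
    have hmi : (m : k) ≠ i := fun h => (Finset.mem_erase.mp hm).1 (Subtype.ext h)
    rw [if_neg hmi, hrest m hmi]
  rw [hrest_sum, if_pos rfl, hcol r]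
  linear_combination G r i * hmerge

end Matrix

theorem add_mul_div_one_add_abs_mem_Icc {a b : ℝ} (lam : ℝ) (ha : a ∈ Icc (-1) 1)
    (hb : b ∈ Icc (-1) 1) : (a + lam * b) / (1 + |lam|) ∈ Icc (-1) 1 := by
  rw [mem_Icc, ← abs_le] at ha hb ⊢
  have hpos : 0 < 1 + |lam| := by positivity
  rw [abs_div, abs_of_pos hpos, div_le_one hpos]
  calc |a + lam * b| ≤ |a| + |lam| * |b| := by rw [← abs_mul]; exact abs_add_le _ _
    _ ≤ 1 + |lam| * 1 := by gcongr
    _ = 1 + |lam| := by rw [mul_one]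

theorem exists_mem_Icc_add_mul_eq {t : ℝ} (lam : ℝ) (ht : t ∈ Icc (-1) 1) :
    ∃ b ∈ Icc (-1 : ℝ) 1, t + lam * b = (1 + |lam|) * t := by
  rcases le_total 0 lam with hlam | hlam
  · exact ⟨t, ht, by rw [abs_of_nonneg hlam]; ring⟩
  · refine ⟨-t, ⟨by linarith [ht.2], by linarith [ht.1]⟩, ?_⟩
    rw [abs_of_nonpos hlam]; ring

theorem zonotope_colinear_merge {d k : ℕ} (c : Fin d → ℝ)
    (G : Matrix (Fin d) (Fin k) ℝ) (i j : Fin k) (hij : i ≠ j) (lam : ℝ)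
    (hcol : ∀ r, G r j = lam * G r i) :
    zonotope c G
      = zonotope c (fun r (m : {m : Fin k // m ≠ j}) =>
          if (m : Fin k) = i then (1 + |lam|) * G r i else G r m) := by
  change zonotope c G = zonotope c (G.mergeColumns i j (1 + |lam|))
  ext x
  constructor
  · rintro ⟨ε, hε, rfl⟩
    have hpos : 0 < 1 + |lam| := by positivity
    let ε' (m : {m : Fin k // m ≠ j}) : ℝ :=
      if (m : Fin k) = i then (ε i + lam * ε j) / (1 + |lam|) else ε m
    refine ⟨ε', fun m => ?_, ?_⟩
    · by_cases hm : (m : Fin k) = i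
      · simpa only [ε', if_pos hm] using add_mul_div_one_add_abs_mem_Icc lam (hε i) (hε j)
      · simpa only [ε', if_neg hm] using hε m
    · have hmerge : (1 + |lam|) * ε' ⟨i, hij⟩ = ε i + lam * ε j := by
        simp only [ε', if_pos]
        exact mul_div_cancel₀ _ hpos.ne'
      rw [G.mergeColumns_mulVec hij hcol hmerge fun m hm => if_neg hm]
  · rintro ⟨ε', hε', rfl⟩
    obtain ⟨b, hb, hmerge⟩ := exists_mem_Icc_add_mul_eq lam (hε' ⟨i, hij⟩)
    let ε (m : Fin k) : ℝ := if h : m = j then b else ε' ⟨m, h⟩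
    refine ⟨ε, fun m => ?_, ?_⟩
    · by_cases hm : m = j
      · simpa only [ε, dif_pos hm] using hb
      · simpa only [ε, dif_neg hm] using hε' ⟨m, hm⟩
    · rw [G.mergeColumns_mulVec hij hcol (ε := ε) (by simp [ε, hij, ← hmerge])
        fun m _ => by simp [ε, m.2]]
end
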